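/- arXiv:2511.06243 — 2 statements merged into one kernel-verified Lean document; each statement's English description precedes it below -/
import Mathlib

section
/- Let (Ω, ℱ, P) be a probability space and let Y : Ω → ℝ be a random variable taking values in {0, 1} almost surely, with p := P(Y = 1). Fix s₀ ∈ ℝ and γ ≥ 0. Let 𝒮 be the set of real numbers E[−S·Y] as S ranges over all measurable functions S : Ω → ℝ with s₀ − γ ≤ S ≤ s₀ + γ almost surely and E[S] = s₀. Then −s₀·p − γ·(1/2 − |p − 1/2|) is the least element of 𝒮 (equivalently, the least element is E[−s₀·Y] − γ·min(p, 1 − p)). -/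
open MeasureTheory

lemma half_sub_abs_sub_half_eq_min (p : ℝ) : 1 / 2 - |p - 1 / 2| = min p (1 - p) := by
  rcases le_total p (1 - p) with h | h
  · rw [min_eq_left h, abs_of_nonpos (by linarith)]; ring
  · rw [min_eq_right h, abs_of_nonneg (by linarith)]; ring

section Score

variable {Ω : Type*} [MeasurableSpace Ω] {P : Measure Ω} [IsProbabilityMeasure P] {A : Set Ω}

/-- On `A` the score exceeds `s₀` by at most `γ`, and whatever it gains there above `s₀` must be
given back on `Aᶜ`, where it lies at most `γ` below `s₀`. -/
lemma setIntegral_le_of_mem_Icc_of_integral_eq (hA : MeasurableSet A) {S : Ω → ℝ} {s₀ γ : ℝ}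
    (hSm : AEStronglyMeasurable S P) (hbd : ∀ᵐ ω ∂P, s₀ - γ ≤ S ω ∧ S ω ≤ s₀ + γ)
    (hmean : ∫ ω, S ω ∂P = s₀) :
    ∫ ω in A, S ω ∂P ≤ s₀ * P.real A + γ * min (P.real A) (1 - P.real A) := by
  have hS : Integrable S P := by
    refine Integrable.of_bound hSm (|s₀| + |γ|) ?_
    filter_upwards [hbd] with ω ⟨hlo, hhi⟩
    rw [Real.norm_eq_abs, abs_le]
    constructor <;> linarith [neg_abs_le s₀, le_abs_self s₀, neg_abs_le γ, le_abs_self γ]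
  have hon : ∫ ω in A, S ω ∂P ≤ (s₀ + γ) * P.real A := by
    calc ∫ ω in A, S ω ∂P ≤ ∫ _ in A, s₀ + γ ∂P :=
          setIntegral_mono_ae hS.integrableOn (integrable_const _).integrableOn
            (hbd.mono fun _ h => h.2)
      _ = (s₀ + γ) * P.real A := by rw [setIntegral_const, smul_eq_mul, mul_comm]
  have hoff : (s₀ - γ) * (1 - P.real A) ≤ ∫ ω in Aᶜ, S ω ∂P := by
    calc (s₀ - γ) * (1 - P.real A) = ∫ _ in Aᶜ, s₀ - γ ∂P := by
          rw [setIntegral_const, smul_eq_mul, probReal_compl_eq_one_sub hA, mul_comm]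
      _ ≤ ∫ ω in Aᶜ, S ω ∂P :=
          setIntegral_mono_ae (integrable_const _).integrableOn hS.integrableOn
            (hbd.mono fun _ h => h.1)
  have hsplit := integral_add_compl hA hS
  rcases le_total (P.real A) (1 - P.real A) with h | h
  · rw [min_eq_left h]; linarith
  · rw [min_eq_right h]; linarith

open Classical in
/-- The bound is attained by the two-valued score `s₀ + c` on `A`, `s₀ - d` on `Aᶜ`, with
`c * p = d * (1 - p) = γ * min p (1 - p)`; when `p` or `1 - p` vanishes so does the minimum,
and the junk value `0 / 0 = 0` gives the constant score `s₀`. -/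
lemma exists_mem_Icc_integral_eq_setIntegral_eq (hA : MeasurableSet A) (s₀ : ℝ) {γ : ℝ}
    (hγ : 0 ≤ γ) :
    ∃ S : Ω → ℝ, Measurable S ∧ (∀ ω, s₀ - γ ≤ S ω ∧ S ω ≤ s₀ + γ) ∧ ∫ ω, S ω ∂P = s₀ ∧
      ∫ ω in A, S ω ∂P = s₀ * P.real A + γ * min (P.real A) (1 - P.real A) := by
  set p := P.real A
  set m := min p (1 - p)
  have hm0 : 0 ≤ m :=
    le_min measureReal_nonneg (by linarith [measureReal_le_one (μ := P) (s := A)])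
  have hmp : m / p * p = m := by
    rcases eq_or_ne p 0 with h | h
    · simp [m, h]
    · exact div_mul_cancel₀ m h
  have hmq : m / (1 - p) * (1 - p) = m := by
    rcases eq_or_ne (1 - p) 0 with h | h
    · simp [m, h, p, measureReal_nonneg]
    · exact div_mul_cancel₀ m h
  have hc : 0 ≤ m / p ∧ m / p ≤ 1 :=
    ⟨div_nonneg hm0 measureReal_nonneg, div_le_one_of_le₀ (min_le_left _ _) measureReal_nonneg⟩
  have hd : 0 ≤ m / (1 - p) ∧ m / (1 - p) ≤ 1 :=
    ⟨div_nonneg hm0 (hm0.trans (min_le_right _ _)),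
      div_le_one_of_le₀ (min_le_right _ _) (hm0.trans (min_le_right _ _))⟩
  refine ⟨A.piecewise (fun _ => s₀ + γ * (m / p)) (fun _ => s₀ - γ * (m / (1 - p))),
    measurable_const.piecewise hA measurable_const, fun ω => ?_, ?_, ?_⟩
  · by_cases hω : ω ∈ A
    · simp only [Set.piecewise_eq_of_mem _ _ _ hω]
      constructor <;> nlinarith
    · simp only [Set.piecewise_eq_of_notMem _ _ _ hω]
      constructor <;> nlinarith
  · rw [integral_piecewise hA (integrable_const _).integrableOn (integrable_const _).integrableOn,
      setIntegral_const, setIntegral_const, probReal_compl_eq_one_sub hA, smul_eq_mul, smul_eq_mul]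
    linear_combination γ * hmp - γ * hmq
  · rw [setIntegral_congr_fun hA (Set.piecewise_eqOn A _ _), setIntegral_const, smul_eq_mul]
    linear_combination γ * hmp

end Score

/-- minimization half of Proposition 2 (binary outcome, single stratum).
For a binary outcome `Y` with `p = P(Y = 1)`, among all measurable scores `S` with
`s₀ - γ ≤ S ≤ s₀ + γ` a.s. and `E[S] = s₀`, the least value of `E[-S⬝Y]` is
`-s₀⬝p - γ⬝(1/2 - |p - 1/2|)`. -/
theorem ade_lower_bound_binary_outcome
    {Ω : Type*} [MeasurableSpace Ω] (P : Measure Ω) [IsProbabilityMeasure P]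
    (Y : Ω → ℝ) (hYm : Measurable Y)
    (hbin : ∀ᵐ ω ∂P, Y ω = 0 ∨ Y ω = 1)
    (p : ℝ) (hp : p = (P {ω | Y ω = 1}).toReal)
    (s₀ γ : ℝ) (hγ : 0 ≤ γ) :
    IsLeast
      {v : ℝ | ∃ S : Ω → ℝ, Measurable S ∧
        (∀ᵐ ω ∂P, s₀ - γ ≤ S ω ∧ S ω ≤ s₀ + γ) ∧
        (∫ ω, S ω ∂P = s₀) ∧
        v = ∫ ω, -(S ω * Y ω) ∂P}
      (-(s₀ * p) - γ * (1/2 - |p - 1/2|)) := by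
  set A := {ω | Y ω = 1}
  have hA : MeasurableSet A := hYm (measurableSet_singleton 1)
  have hobj (S : Ω → ℝ) : ∫ ω, -(S ω * Y ω) ∂P = -∫ ω in A, S ω ∂P := by
    rw [integral_neg, ← integral_indicator hA]
    congr 1
    refine integral_congr_ae (hbin.mono fun ω hω => ?_)
    rcases hω with h | h <;> simp [A, Set.indicator, h]
  rw [half_sub_abs_sub_half_eq_min, show p = P.real A from hp]
  constructor
  · obtain ⟨S, hSm, hbd, hmean, hSA⟩ :=
      exists_mem_Icc_integral_eq_setIntegral_eq (P := P) hA s₀ hγ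
    exact ⟨S, hSm, ae_of_all P hbd, hmean, by rw [hobj, hSA]; ring⟩
  · rintro v ⟨S, hSm, hbd, hmean, rfl⟩
    rw [hobj]
    linarith [setIntegral_le_of_mem_Icc_of_integral_eq hA hSm.aestronglyMeasurable hbd hmean]
end

section
/- Let γ ≥ 0 and let g : ℝ → ℝ be an everywhere positive, strictly increasing function with g(0) = 1 that is differentiable at 0. Let f, F : ℝ → ℝ be everywhere positive functions, both differentiable at a point a ∈ ℝ. Suppose that for all a₁, a₂ ∈ ℝ, g(−γ·|a₁ − a₂|) ≤ (f(a₂)·F(a₁)) / (f(a₁)·F(a₂)) ≤ g(γ·|a₁ − a₂|). Then F′(a)/F(a) − γ·g′(0) ≤ f′(a)/f(a) ≤ F′(a)/F(a) + γ·g′(0). -/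
/-!
Put `r = log f - log F`. Taking logarithms, the model says that the increment `r (a + t) - r a`
lies between `log g (-γ t)` and `log g (γ t)` for `t > 0`. Dividing by `t` and letting `t → 0⁺`,
the slopes of `r` tend to `r'(a) = f'(a)/f(a) - F'(a)/F(a)`, while those of the two bounds tend
to `∓γ g'(0)` since `g 0 = 1`.
-/

open Filter Topology Real

theorem HasDerivAt.le_of_forall_pos_sub_le {r φ : ℝ → ℝ} {a r' φ' : ℝ}
    (hr : HasDerivAt r r' a) (hφ : HasDerivAt φ φ' 0) (hφ0 : φ 0 = 0)
    (hle : ∀ t, 0 < t → r (a + t) - r a ≤ φ t) : r' ≤ φ' := by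
  refine le_of_tendsto_of_tendsto hr.tendsto_slope_zero_right hφ.tendsto_slope_zero_right ?_
  filter_upwards [self_mem_nhdsWithin] with t (ht : 0 < t)
  simpa [hφ0] using smul_le_smul_of_nonneg_left (hle t ht) (inv_nonneg.2 ht.le)

theorem hasDerivAt_log_comp_const_mul {g : ℝ → ℝ} (hg0 : g 0 = 1)
    (hgd : DifferentiableAt ℝ g 0) (c : ℝ) :
    HasDerivAt (fun t => log (g (c * t))) (c * deriv g 0) 0 := by
  have hlin : HasDerivAt (fun t : ℝ => c * t) c 0 := by
    simpa using (hasDerivAt_id (0 : ℝ)).const_mul c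
  have hg : HasDerivAt g (deriv g 0) (c * 0) := by
    simpa using hgd.hasDerivAt
  simpa [hg0, mul_comm] using (hg.comp 0 hlin).log (by simp [hg0])

theorem log_odds_ratio {f F : ℝ → ℝ} (hf : ∀ x, 0 < f x) (hF : ∀ x, 0 < F x) (x y : ℝ) :
    log (f y * F x / (f x * F y)) = (log (f y) - log (F y)) - (log (f x) - log (F x)) := by
  rw [log_div (mul_pos (hf y) (hF x)).ne' (mul_pos (hf x) (hF y)).ne',
    log_mul (hf y).ne' (hF x).ne', log_mul (hf x).ne' (hF y).ne']
  ring

theorem g_marginal_sensitivity_score_bound_general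
    (γ : ℝ) (g : ℝ → ℝ)
    (hgpos : ∀ x, 0 < g x) (hg0 : g 0 = 1)
    (hgd : DifferentiableAt ℝ g 0)
    (f F : ℝ → ℝ)
    (hf : ∀ x, 0 < f x) (hF : ∀ x, 0 < F x) (a : ℝ)
    (hfd : DifferentiableAt ℝ f a) (hFd : DifferentiableAt ℝ F a)
    (hmodel : ∀ a₁ a₂ : ℝ,
      g (-(γ * |a₁ - a₂|)) ≤ f a₂ * F a₁ / (f a₁ * F a₂) ∧
      f a₂ * F a₁ / (f a₁ * F a₂) ≤ g (γ * |a₁ - a₂|)) :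
    deriv F a / F a - γ * deriv g 0 ≤ deriv f a / f a ∧
      deriv f a / f a ≤ deriv F a / F a + γ * deriv g 0 := by
  set r : ℝ → ℝ := fun x => log (f x) - log (F x)
  have hr : HasDerivAt r (deriv f a / f a - deriv F a / F a) a :=
    (hfd.hasDerivAt.log (hf a).ne').sub (hFd.hasDerivAt.log (hF a).ne')
  have hincr : ∀ t, 0 < t →
      log (g (-γ * t)) ≤ r (a + t) - r a ∧ r (a + t) - r a ≤ log (g (γ * t)) := by
    intro t ht
    obtain ⟨hlow, hup⟩ := hmodel a (a + t)
    rw [sub_add_cancel_left, abs_neg, abs_of_pos ht] at hlow hup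
    rw [← neg_mul] at hlow
    simp only [r, ← log_odds_ratio hf hF]
    have hratio : 0 < f (a + t) * F a / (f a * F (a + t)) :=
      div_pos (mul_pos (hf _) (hF a)) (mul_pos (hf a) (hF _))
    exact ⟨log_le_log (hgpos _) hlow, log_le_log hratio hup⟩
  have hupper := hr.le_of_forall_pos_sub_le (hasDerivAt_log_comp_const_mul hg0 hgd γ)
    (by simp [hg0]) fun t ht => (hincr t ht).2
  have hlower := hr.neg.le_of_forall_pos_sub_le (hasDerivAt_log_comp_const_mul hg0 hgd (-γ)).neg
    (by simp [hg0]) fun t ht => by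
      simp only [Pi.neg_apply]
      linarith [(hincr t ht).1]
  constructor <;> linarith

/-- Lemma 10, `g` marginal sensitivity model: if `g` is positive, strictly
increasing, `g 0 = 1`, differentiable at `0`, and the odds ratio of the latent density
`f` against the observed density `F` at any two dose levels is bounded between
`g(-γ|a₁ - a₂|)` and `g(γ|a₁ - a₂|)`, then the latent score `f'/f` lies within
`γ⬝g'(0)` of the observed score `F'/F`. -/
theorem g_marginal_sensitivity_score_bound
    (γ : ℝ) (hγ : 0 ≤ γ) (g : ℝ → ℝ)
    (hgpos : ∀ x, 0 < g x) (hgmono : StrictMono g) (hg0 : g 0 = 1)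
    (hgd : DifferentiableAt ℝ g 0)
    (f F : ℝ → ℝ)
    (hf : ∀ x, 0 < f x) (hF : ∀ x, 0 < F x) (a : ℝ)
    (hfd : DifferentiableAt ℝ f a) (hFd : DifferentiableAt ℝ F a)
    (hmodel : ∀ a₁ a₂ : ℝ,
      g (-(γ * |a₁ - a₂|)) ≤ f a₂ * F a₁ / (f a₁ * F a₂) ∧
      f a₂ * F a₁ / (f a₁ * F a₂) ≤ g (γ * |a₁ - a₂|)) :
    deriv F a / F a - γ * deriv g 0 ≤ deriv f a / f a ∧
      deriv f a / f a ≤ deriv F a / F a + γ * deriv g 0 :=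
  g_marginal_sensitivity_score_bound_general γ g hgpos hg0 hgd f F hf hF a hfd hFd hmodel
end
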